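/- arXiv:2508.13100 — 3 statements merged into one kernel-verified Lean document; each statement's English description precedes it below -/
import Mathlib

section
/- The averaged two-bin calibration error is rank-preserving: for every positive integer T, every p ∈ [0,1]^T, and every pair of prediction sequences r_1, r_2 ∈ [0,1]^T, E_{y~p}[ATB(r_1,y)] − E_{y~p}[ATB(r_2,y)] = ATB(r_1,p) − ATB(r_2,p). -/
/-!
For a fixed bin boundary `q` both bin sums are affine in the states `y`, and for independent
Bernoulli coordinates (bias plus variance)
`E[(∑_{t ∈ S} (r_t - y_t))²] = (∑_{t ∈ S} (r_t - p_t))² + ∑_{t ∈ S} p_t (1 - p_t)`.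
The two bins partition the indices, so the variance terms add up to `∑_t p_t (1 - p_t)`
whatever `r` and `q` are. Averaging over `q` gives
`E_y ATB(r, y) = ATB(r, p) + T⁻² ∑_t p_t (1 - p_t)`, and the extra term cancels in the
difference.
-/

open MeasureTheory Finset

noncomputable section

/-- Expectation over independent Bernoulli states `y ~ p`: each `y t ∈ {0,1}` is drawn
independently with mean `p t`. -/
def bernExp {T : ℕ} (p : Fin T → ℝ) (f : (Fin T → ℝ) → ℝ) : ℝ :=
  ∑ y : Fin T → Bool, (∏ t, if y t then p t else 1 - p t) * f (fun t => if y t then 1 else 0)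

/-- Averaged two-bin calibration error of predictions `r` w.r.t. states (or probabilities) `y`:
the bin boundary `q` is uniform on `[0,1]`. -/
def atbSeq {T : ℕ} (r y : Fin T → ℝ) : ℝ :=
  ∫ q in (0:ℝ)..1, (1 / (T:ℝ)^2) *
    ((∑ t, if r t < q then (r t - y t) else 0)^2 +
     (∑ t, if q ≤ r t then (r t - y t) else 0)^2)

lemma abs_sum_ite_le {ι : Type*} (s : Finset ι) (P : ι → Prop) [DecidablePred P]
    (a : ι → ℝ) :
    |∑ i ∈ s, if P i then a i else 0| ≤ ∑ i ∈ s, |a i| :=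
  (abs_sum_le_sum_abs _ _).trans (sum_le_sum fun i _ => by split_ifs <;> simp)

section BernoulliExpectation

variable {T : ℕ} (p : Fin T → ℝ)

lemma bernExp_sum {ι : Type*} (s : Finset ι) (f : ι → (Fin T → ℝ) → ℝ) :
    bernExp p (fun y => ∑ i ∈ s, f i y) = ∑ i ∈ s, bernExp p (f i) := by
  simp only [bernExp, mul_sum]
  exact sum_comm

lemma bernExp_add (f g : (Fin T → ℝ) → ℝ) :
    bernExp p (fun y => f y + g y) = bernExp p f + bernExp p g := by
  simp only [bernExp, mul_add, sum_add_distrib]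

lemma bernExp_const_mul (c : ℝ) (f : (Fin T → ℝ) → ℝ) :
    bernExp p (fun y => c * f y) = c * bernExp p f := by
  simp only [bernExp, mul_sum]
  exact sum_congr rfl fun _ _ => mul_left_comm _ _ _

lemma bernExp_prod (g : Fin T → ℝ → ℝ) :
    bernExp p (fun y => ∏ t, g t (y t)) = ∏ t, ((1 - p t) * g t 0 + p t * g t 1) := by
  have h (t : Fin T) : (1 - p t) * g t 0 + p t * g t 1
      = ∑ b : Bool, (if b then p t else 1 - p t) * g t (if b then 1 else 0) := by
    simp [add_comm]
  simp only [h, Fintype.prod_sum, bernExp, prod_mul_distrib]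

lemma bernExp_sub_mul_sub (s t : Fin T) (c d : ℝ) :
    bernExp p (fun y => (c - y s) * (d - y t))
      = (c - p s) * (d - p t) + if s = t then p s * (1 - p s) else 0 := by
  rcases eq_or_ne s t with rfl | hst
  · have h := bernExp_prod p (fun u x => if u = s then (c - x) * (d - x) else 1)
    simp only [Fintype.prod_ite_eq', mul_ite, mul_one, ite_add_ite, sub_add_cancel] at h
    simp only [h, if_true]
    ring
  · have h := bernExp_prod p
      (fun u x => (if u = s then c - x else 1) * (if u = t then d - x else 1))
    simp only [prod_mul_distrib, Fintype.prod_ite_eq'] at h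
    have factor (u : Fin T) :
        (1 - p u) * ((if u = s then c - 0 else 1) * if u = t then d - 0 else 1)
          + p u * ((if u = s then c - 1 else 1) * if u = t then d - 1 else 1)
        = (if u = s then c - p s else 1) * (if u = t then d - p t else 1) := by
      by_cases hs : u = s
      · subst hs
        simp only [hst, if_true, if_false]
        ring
      by_cases ht : u = t
      · subst ht
        simp only [hs, if_true, if_false]
        ring
      simp only [hs, ht, if_false]
      ring
    rw [h, if_neg hst, add_zero, prod_congr rfl fun u _ => factor u, prod_mul_distrib,
      Fintype.prod_ite_eq', Fintype.prod_ite_eq']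

lemma bernExp_sq_sum_sub (S : Finset (Fin T)) (c : Fin T → ℝ) :
    bernExp p (fun y => (∑ t ∈ S, (c t - y t)) ^ 2)
      = (∑ t ∈ S, (c t - p t)) ^ 2 + ∑ t ∈ S, p t * (1 - p t) := by
  simp only [sq, sum_mul_sum, bernExp_sum, bernExp_sub_mul_sub, sum_add_distrib,
    sum_ite_eq, sum_ite_mem, inter_self]

lemma bernExp_intervalIntegral (f : (Fin T → ℝ) → ℝ → ℝ) (a b : ℝ)
    (hf : ∀ y, IntervalIntegrable (f y) volume a b) :
    bernExp p (fun y => ∫ q in a..b, f y q) = ∫ q in a..b, bernExp p (fun y => f y q) := by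
  simp only [bernExp, ← intervalIntegral.integral_const_mul]
  exact (intervalIntegral.integral_finsetSum fun y _ => (hf _).const_mul _).symm

end BernoulliExpectation

section TwoBinError

variable {T : ℕ} (r y : Fin T → ℝ)

def twoBinError (q : ℝ) : ℝ :=
  (1 / (T:ℝ)^2) *
    ((∑ t, if r t < q then (r t - y t) else 0)^2 +
     (∑ t, if q ≤ r t then (r t - y t) else 0)^2)

lemma atbSeq_eq_integral_twoBinError :
    atbSeq r y = ∫ q in (0:ℝ)..1, twoBinError r y q :=
  rfl

lemma twoBinError_eq_sum_filter (q : ℝ) :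
    twoBinError r y q = (1 / (T:ℝ)^2) *
      ((∑ t ∈ univ.filter (r · < q), (r t - y t))^2 +
       (∑ t ∈ univ.filter (¬ r · < q), (r t - y t))^2) := by
  simp only [twoBinError, sum_filter, not_lt]

lemma measurable_twoBinError : Measurable (twoBinError r y) := by
  refine (Measurable.add ?_ ?_).const_mul _ <;>
    refine (measurable_sum _ fun t _ =>
      Measurable.ite ?_ measurable_const measurable_const).pow_const 2
  exacts [measurableSet_Ioi, measurableSet_Iic]

lemma norm_twoBinError_le (q : ℝ) :
    ‖twoBinError r y q‖
      ≤ 1 / (T:ℝ)^2 * ((∑ t, |r t - y t|)^2 + (∑ t, |r t - y t|)^2) := by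
  rw [Real.norm_eq_abs, twoBinError, abs_of_nonneg (by positivity)]
  gcongr _ * (?_ + ?_) <;> exact sq_le_sq.2 ((abs_sum_ite_le _ _ _).trans (le_abs_self _))

lemma intervalIntegrable_twoBinError (a b : ℝ) :
    IntervalIntegrable (twoBinError r y) volume a b :=
  intervalIntegrable_iff.2 <| .of_bound measure_Ioc_lt_top
    (measurable_twoBinError r y).aestronglyMeasurable _ (.of_forall (norm_twoBinError_le r y))

end TwoBinError

lemma bernExp_twoBinError {T : ℕ} (p r : Fin T → ℝ) (q : ℝ) :
    bernExp p (fun y => twoBinError r y q)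
      = twoBinError r p q + 1 / (T:ℝ)^2 * ∑ t, p t * (1 - p t) := by
  simp only [twoBinError_eq_sum_filter, bernExp_const_mul, bernExp_add, bernExp_sq_sum_sub]
  rw [← sum_filter_add_sum_filter_not univ (r · < q) (fun t => p t * (1 - p t))]
  ring

lemma bernExp_atbSeq {T : ℕ} (p r : Fin T → ℝ) :
    bernExp p (fun y => atbSeq r y) = atbSeq r p + 1 / (T:ℝ)^2 * ∑ t, p t * (1 - p t) := by
  simp only [atbSeq_eq_integral_twoBinError]
  calc bernExp p (fun y => ∫ q in (0:ℝ)..1, twoBinError r y q)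
      = ∫ q in (0:ℝ)..1, bernExp p (fun y => twoBinError r y q) :=
        bernExp_intervalIntegral p _ 0 1 fun y => intervalIntegrable_twoBinError r y 0 1
    _ = ∫ q in (0:ℝ)..1, (twoBinError r p q + 1 / (T:ℝ)^2 * ∑ t, p t * (1 - p t)) := by
        simp only [bernExp_twoBinError]
    _ = (∫ q in (0:ℝ)..1, twoBinError r p q) + 1 / (T:ℝ)^2 * ∑ t, p t * (1 - p t) := by
        rw [intervalIntegral.integral_add (intervalIntegrable_twoBinError r p 0 1)
          intervalIntegrable_const, intervalIntegral.integral_const, sub_zero, one_smul]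

theorem atb_rank_preserving_general (T : ℕ) (p r₁ r₂ : Fin T → ℝ) :
    bernExp p (fun y => atbSeq r₁ y) - bernExp p (fun y => atbSeq r₂ y)
      = atbSeq r₁ p - atbSeq r₂ p := by
  rw [bernExp_atbSeq p r₁, bernExp_atbSeq p r₂]
  ring

/-- The averaged two-bin calibration error is rank-preserving. -/
theorem atb_rank_preserving (T : ℕ) (hT : 0 < T) (p r₁ r₂ : Fin T → ℝ)
    (hp : ∀ t, p t ∈ Set.Icc (0:ℝ) 1)
    (hr₁ : ∀ t, r₁ t ∈ Set.Icc (0:ℝ) 1) (hr₂ : ∀ t, r₂ t ∈ Set.Icc (0:ℝ) 1) :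
    bernExp p (fun y => atbSeq r₁ y) - bernExp p (fun y => atbSeq r₂ y)
      = atbSeq r₁ p - atbSeq r₂ p :=
  atb_rank_preserving_general T p r₁ r₂

end
end

section
/- For every positive integer T, every two prediction sequences r_1, r_2 ∈ [0,1]^T, and every state sequence y ∈ {0,1}^T, it holds that |ℓ1-ATB(r_1,y) − ℓ1-ATB(r_2,y)| ≤ (3/T) ‖r_1 − r_2‖_1 and |ATB(r_1,y) − ATB(r_2,y)| ≤ (6/T) ‖r_1 − r_2‖_1, where ‖r_1 − r_2‖_1 = Σ_{t=1}^T |r_{1,t} − r_{2,t}|. -/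
open MeasureTheory Finset

noncomputable section

/-- ℓ1 variant of the averaged two-bin calibration error on sequences. -/
def l1atbSeq {T : ℕ} (r y : Fin T → ℝ) : ℝ :=
  ∫ q in (0:ℝ)..1, (1 / (T:ℝ)) *
    (|∑ t, if r t < q then (r t - y t) else 0| +
     |∑ t, if q ≤ r t then (r t - y t) else 0|)

/-! Moving one prediction from `a` to `b` (say `a ≤ b`) changes the two bin sums only through
that coordinate. For a threshold `q ∉ (a, b]` the coordinate stays in its bin and its residual
changes by `|a - b|`; for `q ∈ (a, b]` it switches bins, which costs at most `2` because residuals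
lie in `[-1, 1]`. Integrating over `q` bounds the total change of the bin sums by `3 |a - b|` per
coordinate. The ℓ1 integrand is `1/T`-Lipschitz in the bin sums, and the squared one is
`2/T`-Lipschitz on their range `[-T, T]`. -/

lemma intervalIntegrable_of_abs_le {f : ℝ → ℝ} (hf : Measurable f) {C : ℝ}
    (hC : ∀ q, |f q| ≤ C) (a b : ℝ) : IntervalIntegrable f volume a b :=
  (intervalIntegrable_const (c := C)).mono_fun hf.aestronglyMeasurable
    (ae_of_all _ fun q => (hC q).trans (le_abs_self C))

lemma abs_intervalIntegral_sub_le {f g D : ℝ → ℝ} {a b : ℝ} (hab : a ≤ b)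
    (hf : IntervalIntegrable f volume a b) (hg : IntervalIntegrable g volume a b)
    (hD : IntervalIntegrable D volume a b) (h : ∀ q, |f q - g q| ≤ D q) :
    |(∫ q in a..b, f q) - ∫ q in a..b, g q| ≤ ∫ q in a..b, D q := by
  rw [← intervalIntegral.integral_sub hf hg]
  exact intervalIntegral.norm_integral_le_of_norm_le hab
    (ae_of_all _ fun q _ => (Real.norm_eq_abs _).trans_le (h q)) hD

lemma abs_abs_add_abs_sub_le (x₁ y₁ x₂ y₂ : ℝ) :
    |(|x₁| + |y₁|) - (|x₂| + |y₂|)| ≤ |x₁ - x₂| + |y₁ - y₂| := by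
  rw [add_sub_add_comm]
  exact (abs_add_le _ _).trans
    (add_le_add (abs_abs_sub_abs_le_abs_sub x₁ x₂) (abs_abs_sub_abs_le_abs_sub y₁ y₂))

lemma abs_sq_add_sq_sub_le {x₁ y₁ x₂ y₂ M : ℝ} (hx₁ : |x₁| ≤ M) (hy₁ : |y₁| ≤ M)
    (hx₂ : |x₂| ≤ M) (hy₂ : |y₂| ≤ M) :
    |(x₁ ^ 2 + y₁ ^ 2) - (x₂ ^ 2 + y₂ ^ 2)| ≤ 2 * M * (|x₁ - x₂| + |y₁ - y₂|) := by
  have abs_sq_sub_sq_le : ∀ {u v : ℝ}, |u| ≤ M → |v| ≤ M → |u ^ 2 - v ^ 2| ≤ 2 * M * |u - v| :=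
    fun {u v} hu hv => by
      rw [sq_sub_sq, abs_mul]
      gcongr
      exact (abs_add_le u v).trans (by linarith)
  rw [add_sub_add_comm, mul_add]
  exact (abs_add_le _ _).trans (add_le_add (abs_sq_sub_sq_le hx₁ hx₂) (abs_sq_sub_sq_le hy₁ hy₂))

lemma integral_indicator_Ioc_le {x y a b : ℝ} (hxy : x ≤ y) (hab : a ≤ b) :
    ∫ q in x..y, (Set.Ioc a b).indicator (1 : ℝ → ℝ) q ≤ b - a := by
  rw [intervalIntegral.integral_of_le hxy, integral_indicator_one measurableSet_Ioc,
    measureReal_restrict_apply measurableSet_Ioc, ← Real.volume_real_Ioc_of_le hab]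
  exact measureReal_mono Set.inter_subset_left measure_Ioc_lt_top.ne

def lowerBinTerm (a c q : ℝ) : ℝ := if a < q then a - c else 0

def upperBinTerm (a c q : ℝ) : ℝ := if q ≤ a then a - c else 0

def binTermShift (a b c q : ℝ) : ℝ :=
  |lowerBinTerm a c q - lowerBinTerm b c q| + |upperBinTerm a c q - upperBinTerm b c q|

lemma measurable_lowerBinTerm (a c : ℝ) : Measurable (lowerBinTerm a c) :=
  Measurable.ite measurableSet_Ioi measurable_const measurable_const

lemma measurable_upperBinTerm (a c : ℝ) : Measurable (upperBinTerm a c) :=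
  Measurable.ite measurableSet_Iic measurable_const measurable_const

lemma abs_lowerBinTerm_le (a c q : ℝ) : |lowerBinTerm a c q| ≤ |a - c| := by
  unfold lowerBinTerm; split_ifs <;> simp

lemma abs_upperBinTerm_le (a c q : ℝ) : |upperBinTerm a c q| ≤ |a - c| := by
  unfold upperBinTerm; split_ifs <;> simp

lemma intervalIntegrable_binTermShift (a b c x y : ℝ) :
    IntervalIntegrable (binTermShift a b c) volume x y := by
  have lower (d : ℝ) : IntervalIntegrable (lowerBinTerm d c) volume x y :=
    intervalIntegrable_of_abs_le (measurable_lowerBinTerm d c) (abs_lowerBinTerm_le d c) x y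
  have upper (d : ℝ) : IntervalIntegrable (upperBinTerm d c) volume x y :=
    intervalIntegrable_of_abs_le (measurable_upperBinTerm d c) (abs_upperBinTerm_le d c) x y
  exact ((lower a).sub (lower b)).abs.add ((upper a).sub (upper b)).abs

lemma binTermShift_comm (a b c q : ℝ) : binTermShift a b c q = binTermShift b a c q := by
  simp only [binTermShift, abs_sub_comm (lowerBinTerm a c q), abs_sub_comm (upperBinTerm a c q)]

lemma binTermShift_le_of_le {a b c : ℝ} (hab : a ≤ b) (hac : |a - c| ≤ 1) (hbc : |b - c| ≤ 1)
    (q : ℝ) : binTermShift a b c q ≤ |a - b| + 2 * (Set.Ioc a b).indicator 1 q := by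
  simp only [binTermShift, lowerBinTerm, upperBinTerm, Set.indicator, Set.mem_Ioc, Pi.one_apply]
  rcases le_or_gt q a with hqa | haq
  · simp [hqa, hqa.trans hab, hqa.not_gt, (hqa.trans hab).not_gt]
  rcases le_or_gt q b with hqb | hbq
  · simp only [haq, hqb, haq.not_ge, hqb.not_gt, if_true, if_false, and_self, sub_zero,
      zero_sub, abs_neg]
    linarith [abs_nonneg (a - b)]
  · simp [haq, hbq, haq.not_ge, hbq.not_ge]

lemma integral_binTermShift_le {a b c : ℝ} (hac : |a - c| ≤ 1) (hbc : |b - c| ≤ 1) :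
    ∫ q in (0:ℝ)..1, binTermShift a b c q ≤ 3 * |a - b| := by
  wlog hab : a ≤ b generalizing a b
  · simpa only [binTermShift_comm, abs_sub_comm] using this hbc hac (le_of_not_ge hab)
  have hind : IntervalIntegrable ((Set.Ioc a b).indicator (1 : ℝ → ℝ)) volume 0 1 :=
    intervalIntegrable_of_abs_le (C := 1) (measurable_one.indicator measurableSet_Ioc)
      (fun q => by by_cases hq : q ∈ Set.Ioc a b <;> simp [hq]) 0 1
  calc ∫ q in (0:ℝ)..1, binTermShift a b c q
      ≤ ∫ q in (0:ℝ)..1, (|a - b| + 2 * (Set.Ioc a b).indicator 1 q) :=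
        intervalIntegral.integral_mono_on zero_le_one (intervalIntegrable_binTermShift a b c 0 1)
          (intervalIntegrable_const.add (hind.const_mul 2))
          fun q _ => binTermShift_le_of_le hab hac hbc q
    _ = |a - b| + 2 * ∫ q in (0:ℝ)..1, (Set.Ioc a b).indicator 1 q := by
        rw [intervalIntegral.integral_add intervalIntegrable_const (hind.const_mul 2),
          intervalIntegral.integral_const, intervalIntegral.integral_const_mul]
        simp
    _ ≤ |a - b| + 2 * (b - a) := by gcongr; exact integral_indicator_Ioc_le zero_le_one hab
    _ = 3 * |a - b| := by rw [abs_of_nonpos (sub_nonpos.2 hab)]; ring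

section BinSums

variable {ι : Type*} [Fintype ι]

def lowerBinSum (r y : ι → ℝ) (q : ℝ) : ℝ := ∑ t, lowerBinTerm (r t) (y t) q

def upperBinSum (r y : ι → ℝ) (q : ℝ) : ℝ := ∑ t, upperBinTerm (r t) (y t) q

def binShift (r₁ r₂ y : ι → ℝ) (q : ℝ) : ℝ := ∑ t, binTermShift (r₁ t) (r₂ t) (y t) q

lemma abs_lowerBinSum_le (r y : ι → ℝ) (q : ℝ) : |lowerBinSum r y q| ≤ ∑ t, |r t - y t| :=
  (abs_sum_le_sum_abs _ _).trans (sum_le_sum fun _ _ => abs_lowerBinTerm_le _ _ _)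

lemma abs_upperBinSum_le (r y : ι → ℝ) (q : ℝ) : |upperBinSum r y q| ≤ ∑ t, |r t - y t| :=
  (abs_sum_le_sum_abs _ _).trans (sum_le_sum fun _ _ => abs_upperBinTerm_le _ _ _)

lemma sum_abs_sub_le_card {r y : ι → ℝ} (h : ∀ t, |r t - y t| ≤ 1) :
    ∑ t, |r t - y t| ≤ Fintype.card ι :=
  (sum_le_sum fun t _ => h t).trans_eq (by simp)

lemma abs_sub_binSums_le_binShift (r₁ r₂ y : ι → ℝ) (q : ℝ) :
    |lowerBinSum r₁ y q - lowerBinSum r₂ y q| + |upperBinSum r₁ y q - upperBinSum r₂ y q| ≤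
      binShift r₁ r₂ y q := by
  simp only [lowerBinSum, upperBinSum, binShift, binTermShift, sum_add_distrib, ← sum_sub_distrib]
  gcongr <;> exact abs_sum_le_sum_abs _ _

lemma intervalIntegrable_comp_binSums {g : ℝ × ℝ → ℝ} (hg : Continuous g) (r y : ι → ℝ)
    (a b : ℝ) :
    IntervalIntegrable (fun q => g (lowerBinSum r y q, upperBinSum r y q)) volume a b := by
  obtain ⟨C, hC⟩ := IsCompact.exists_bound_of_continuousOn
    (isCompact_closedBall (0 : ℝ × ℝ) (∑ t, |r t - y t|)) hg.continuousOn
  have hmeas : Measurable (fun q => (lowerBinSum r y q, upperBinSum r y q)) :=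
    (Finset.measurable_sum _ fun t _ => measurable_lowerBinTerm _ _).prodMk
      (Finset.measurable_sum _ fun t _ => measurable_upperBinTerm _ _)
  refine intervalIntegrable_of_abs_le (hg.measurable.comp hmeas) (fun q => hC _ ?_) a b
  rw [mem_closedBall_zero_iff, Prod.norm_def]
  exact max_le (abs_lowerBinSum_le r y q) (abs_upperBinSum_le r y q)

lemma intervalIntegrable_binShift (r₁ r₂ y : ι → ℝ) (a b : ℝ) :
    IntervalIntegrable (binShift r₁ r₂ y) volume a b := by
  have := IntervalIntegrable.sum univ fun t _ =>
    intervalIntegrable_binTermShift (r₁ t) (r₂ t) (y t) a b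
  rwa [Finset.sum_fn] at this

lemma integral_binShift_le {r₁ r₂ y : ι → ℝ} (h₁ : ∀ t, |r₁ t - y t| ≤ 1)
    (h₂ : ∀ t, |r₂ t - y t| ≤ 1) :
    ∫ q in (0:ℝ)..1, binShift r₁ r₂ y q ≤ 3 * ∑ t, |r₁ t - r₂ t| := by
  simp only [binShift]
  rw [intervalIntegral.integral_finsetSum fun t _ => intervalIntegrable_binTermShift _ _ _ 0 1,
    mul_sum]
  exact sum_le_sum fun t _ => integral_binTermShift_le (h₁ t) (h₂ t)

end BinSums

lemma abs_l1atbSeq_sub_le {T : ℕ} (r₁ r₂ y : Fin T → ℝ) :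
    |l1atbSeq r₁ y - l1atbSeq r₂ y| ≤ (1 / T) * ∫ q in (0:ℝ)..1, binShift r₁ r₂ y q := by
  have hint : ∀ r : Fin T → ℝ, IntervalIntegrable
      (fun q => (1 / (T:ℝ)) * (|lowerBinSum r y q| + |upperBinSum r y q|)) volume 0 1 :=
    fun r => intervalIntegrable_comp_binSums (g := fun p => (1 / (T:ℝ)) * (|p.1| + |p.2|))
      (by fun_prop) r y 0 1
  rw [← intervalIntegral.integral_const_mul]
  refine abs_intervalIntegral_sub_le zero_le_one (hint r₁) (hint r₂)
    ((intervalIntegrable_binShift r₁ r₂ y 0 1).const_mul _) fun q => ?_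
  rw [← mul_sub, abs_mul, abs_of_nonneg (by positivity)]
  gcongr
  exact (abs_abs_add_abs_sub_le _ _ _ _).trans (abs_sub_binSums_le_binShift r₁ r₂ y q)

lemma abs_atbSeq_sub_le {T : ℕ} {r₁ r₂ y : Fin T → ℝ} (h₁ : ∀ t, |r₁ t - y t| ≤ 1)
    (h₂ : ∀ t, |r₂ t - y t| ≤ 1) :
    |atbSeq r₁ y - atbSeq r₂ y| ≤ (2 / T) * ∫ q in (0:ℝ)..1, binShift r₁ r₂ y q := by
  have hint : ∀ r : Fin T → ℝ, IntervalIntegrable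
      (fun q => (1 / (T:ℝ) ^ 2) * (lowerBinSum r y q ^ 2 + upperBinSum r y q ^ 2)) volume 0 1 :=
    fun r => intervalIntegrable_comp_binSums (g := fun p => (1 / (T:ℝ) ^ 2) * (p.1 ^ 2 + p.2 ^ 2))
      (by fun_prop) r y 0 1
  have hbound : ∀ {r : Fin T → ℝ}, (∀ t, |r t - y t| ≤ 1) → ∀ q,
      |lowerBinSum r y q| ≤ T ∧ |upperBinSum r y q| ≤ T := fun h q =>
    have hcard : ∑ t, |_ - y t| ≤ T := (sum_abs_sub_le_card h).trans_eq (by simp)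
    ⟨(abs_lowerBinSum_le _ y q).trans hcard, (abs_upperBinSum_le _ y q).trans hcard⟩
  rw [← intervalIntegral.integral_const_mul]
  refine abs_intervalIntegral_sub_le zero_le_one (hint r₁) (hint r₂)
    ((intervalIntegrable_binShift r₁ r₂ y 0 1).const_mul _) fun q => ?_
  obtain ⟨hL₁, hU₁⟩ := hbound h₁ q
  obtain ⟨hL₂, hU₂⟩ := hbound h₂ q
  rw [← mul_sub, abs_mul, abs_of_nonneg (by positivity)]
  calc 1 / (T:ℝ) ^ 2 * |_ - _|
      ≤ 1 / (T:ℝ) ^ 2 * (2 * T * binShift r₁ r₂ y q) := by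
        gcongr
        exact (abs_sq_add_sq_sub_le hL₁ hU₁ hL₂ hU₂).trans
          (by gcongr; exact abs_sub_binSums_le_binShift r₁ r₂ y q)
    _ = 2 / T * binShift r₁ r₂ y q := by
        rcases eq_or_ne (T:ℝ) 0 with hT | hT
        · simp [hT]
        · field_simp

theorem atb_seq_continuity_general (T : ℕ) (r₁ r₂ y : Fin T → ℝ)
    (hr₁ : ∀ t, r₁ t ∈ Set.Icc (0:ℝ) 1) (hr₂ : ∀ t, r₂ t ∈ Set.Icc (0:ℝ) 1)
    (hy : ∀ t, y t = 0 ∨ y t = 1) :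
    |l1atbSeq r₁ y - l1atbSeq r₂ y| ≤ (3 / (T:ℝ)) * ∑ t, |r₁ t - r₂ t| ∧
    |atbSeq r₁ y - atbSeq r₂ y| ≤ (6 / (T:ℝ)) * ∑ t, |r₁ t - r₂ t| := by
  have hy01 : ∀ t, y t ∈ Set.Icc (0:ℝ) 1 := fun t => by rcases hy t with h | h <;> simp [h]
  have abs_residual_le : ∀ {r : Fin T → ℝ}, (∀ t, r t ∈ Set.Icc (0:ℝ) 1) → ∀ t, |r t - y t| ≤ 1 :=
    fun hr t => abs_sub_le_of_nonneg_of_le (hr t).1 (hr t).2 (hy01 t).1 (hy01 t).2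
  have hshift := integral_binShift_le (abs_residual_le hr₁) (abs_residual_le hr₂)
  constructor
  · calc _ ≤ (1 / T) * ∫ q in (0:ℝ)..1, binShift r₁ r₂ y q := abs_l1atbSeq_sub_le r₁ r₂ y
      _ ≤ (1 / T) * (3 * ∑ t, |r₁ t - r₂ t|) := by gcongr
      _ = _ := by ring
  · calc _ ≤ (2 / T) * ∫ q in (0:ℝ)..1, binShift r₁ r₂ y q :=
          abs_atbSeq_sub_le (abs_residual_le hr₁) (abs_residual_le hr₂)
      _ ≤ (2 / T) * (3 * ∑ t, |r₁ t - r₂ t|) := by gcongr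
      _ = _ := by ring

/-- Continuity of ATB and ℓ1-ATB on sequences. -/
theorem atb_seq_continuity (T : ℕ) (hT : 0 < T) (r₁ r₂ y : Fin T → ℝ)
    (hr₁ : ∀ t, r₁ t ∈ Set.Icc (0:ℝ) 1) (hr₂ : ∀ t, r₂ t ∈ Set.Icc (0:ℝ) 1)
    (hy : ∀ t, y t = 0 ∨ y t = 1) :
    |l1atbSeq r₁ y - l1atbSeq r₂ y| ≤ (3 / (T:ℝ)) * ∑ t, |r₁ t - r₂ t| ∧
    |atbSeq r₁ y - atbSeq r₂ y| ≤ (6 / (T:ℝ)) * ∑ t, |r₁ t - r₂ t| :=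
  atb_seq_continuity_general T r₁ r₂ y hr₁ hr₂ hy

end
end

section
/- For every probability distribution J on [0,1] × {0,1}, it holds that (2/3) · smCal(J) ≤ ℓ1-ATB(J) ≤ 3 · distCal(J). -/
open MeasureTheory Finset
open scoped ENNReal

noncomputable section

/-- Bias of the lower bin `{v < q}` under a distribution `mu` of prediction-state pairs. -/
def binNeg (mu : Measure (ℝ × ℝ)) (q : ℝ) : ℝ :=
  ∫ x, (x.1 - x.2) * (if x.1 < q then 1 else 0) ∂mu

/-- Bias of the upper bin `{v ≥ q}` under a distribution `mu` of prediction-state pairs. -/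
def binPos (mu : Measure (ℝ × ℝ)) (q : ℝ) : ℝ :=
  ∫ x, (x.1 - x.2) * (if q ≤ x.1 then 1 else 0) ∂mu

/-- Averaged two-bin calibration error of a prediction-state distribution. -/
def ATB (mu : Measure (ℝ × ℝ)) : ℝ :=
  ∫ q in (0:ℝ)..1, ((binNeg mu q)^2 + (binPos mu q)^2)

/-- ℓ1 variant of the averaged two-bin calibration error of a distribution. -/
def l1ATB (mu : Measure (ℝ × ℝ)) : ℝ :=
  ∫ q in (0:ℝ)..1, (|binNeg mu q| + |binPos mu q|)

/-- A distribution of `(v, y)` is calibrated if `E[y | v] = v` almost surely; equivalently,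
`∫ y = ∫ v` over every event measurable in the prediction `v`. -/
def Calibrated (mu : Measure (ℝ × ℝ)) : Prop :=
  ∀ s : Set ℝ, MeasurableSet s →
    ∫ x in Prod.fst ⁻¹' s, x.2 ∂mu = ∫ x in Prod.fst ⁻¹' s, x.1 ∂mu

/-- The lower distance to calibration: the infimum of `E |u - v|` over couplings `(u, v, y)`
whose `(v,y)`-marginal is `mu` and whose `(u,y)`-marginal is calibrated. -/
def distCal (mu : Measure (ℝ × ℝ)) : ℝ :=
  sInf { c : ℝ | ∃ P : Measure (ℝ × ℝ × ℝ), IsProbabilityMeasure P ∧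
    P.map (fun x => x.2) = mu ∧
    Calibrated (P.map (fun x => (x.1, x.2.2))) ∧
    (∀ᵐ x ∂P, x.1 ∈ Set.Icc (0:ℝ) 1) ∧
    c = ∫ x, |x.1 - x.2.1| ∂P }

/-- Smooth calibration error of a distribution: the supremum of `E[(v - y) w(v)]` over
1-Lipschitz weight functions `w : [0,1] → [-1,1]`. -/
def smCal (mu : Measure (ℝ × ℝ)) : ℝ :=
  sSup { c : ℝ | ∃ w : ℝ → ℝ, LipschitzOnWith 1 w (Set.Icc 0 1) ∧
    (∀ x ∈ Set.Icc (0:ℝ) 1, w x ∈ Set.Icc (-1:ℝ) 1) ∧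
    c = ∫ x, (x.1 - x.2) * w x.1 ∂mu }

/-
The lower bound: a Lipschitz weight `w` is absolutely continuous, `w v = w 0 + ∫₀ᵛ w'`, so by
Fubini `E[(v - y) w(v)] = (w 0 + w 1) / 2 · E[v - y] + ½ ∫₀¹ w'(q) (binPos q - binNeg q) dq`.
Since `E[v - y] = binNeg q + binPos q` for every threshold `q`, both terms are bounded by
`l1ATB`, the first with weight `|w 0 + w 1| / 2 ≤ 1` and the second with weight `½`.

The upper bound: in a coupling `(u, v, y)` whose `(u, y)`-marginal is calibrated, every bin of
`(u, y)` has zero bias, so each bin bias of `(v, y)` is the expected change of that bin's term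
when the prediction `u` is replaced by `v`. Summed over the two bins, this change is at most
`|v - u|`, plus `2 |u - y| ≤ 2` for the thresholds `q` between `u` and `v`, a set of length
`|u - v|`; integrating over `q` gives `3 E|u - v|`.
-/

local notation "ρ" => volume.restrict (Set.Ioc (0:ℝ) 1)

@[fun_prop]
lemma measurable_ite_lt {α : Type*} [MeasurableSpace α] {f g : α → ℝ} (hf : Measurable f)
    (hg : Measurable g) : Measurable fun x => if f x < g x then (1:ℝ) else 0 :=
  Measurable.ite (measurableSet_lt hf hg) measurable_const measurable_const

@[fun_prop]
lemma measurable_ite_le {α : Type*} [MeasurableSpace α] {f g : α → ℝ} (hf : Measurable f)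
    (hg : Measurable g) : Measurable fun x => if f x ≤ g x then (1:ℝ) else 0 :=
  Measurable.ite (measurableSet_le hf hg) measurable_const measurable_const

lemma abs_ite_one_zero_le (p : Prop) [Decidable p] : |(if p then (1:ℝ) else 0)| ≤ 1 := by
  split_ifs <;> simp

lemma MeasureTheory.Integrable.mul_ite_one_zero {α : Type*} [MeasurableSpace α] {μ : Measure α}
    {f : α → ℝ} (hf : Integrable f μ) {p : α → Prop} [DecidablePred p]
    (hp : MeasurableSet {x | p x}) : Integrable (fun x => f x * if p x then 1 else 0) μ := by
  refine (hf.indicator hp).congr (ae_of_all _ fun x => ?_)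
  simp [Set.indicator_apply, mul_ite]

lemma integrable_of_ae_mem_Icc_zero_one {α : Type*} [MeasurableSpace α] {μ : Measure α}
    [IsFiniteMeasure μ] {f : α → ℝ} (hf : AEStronglyMeasurable f μ)
    (h : ∀ᵐ x ∂μ, f x ∈ Set.Icc (0:ℝ) 1) : Integrable f μ :=
  .of_bound hf 1 (h.mono fun _ hx => by
    rw [Real.norm_eq_abs, abs_le]; exact ⟨by linarith [hx.1], hx.2⟩)

section Bins

variable {mu : Measure (ℝ × ℝ)}

lemma binNeg_eq_setIntegral (q : ℝ) :
    binNeg mu q = ∫ x in Prod.fst ⁻¹' Set.Iio q, (x.1 - x.2) ∂mu := by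
  rw [← integral_indicator (measurableSet_Iio.preimage measurable_fst)]
  simp [binNeg, Set.indicator, mul_ite]

lemma binPos_eq_setIntegral (q : ℝ) :
    binPos mu q = ∫ x in Prod.fst ⁻¹' Set.Ici q, (x.1 - x.2) ∂mu := by
  rw [← integral_indicator (measurableSet_Ici.preimage measurable_fst)]
  simp [binPos, Set.indicator, mul_ite]

lemma binNeg_map {α : Type*} [MeasurableSpace α] {P : Measure α} {f : α → ℝ × ℝ}
    (hf : Measurable f) (q : ℝ) :
    binNeg (P.map f) q = ∫ x, ((f x).1 - (f x).2) * (if (f x).1 < q then 1 else 0) ∂P :=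
  integral_map hf.aemeasurable (Measurable.aestronglyMeasurable (by fun_prop))

lemma binPos_map {α : Type*} [MeasurableSpace α] {P : Measure α} {f : α → ℝ × ℝ}
    (hf : Measurable f) (q : ℝ) :
    binPos (P.map f) q = ∫ x, ((f x).1 - (f x).2) * (if q ≤ (f x).1 then 1 else 0) ∂P :=
  integral_map hf.aemeasurable (Measurable.aestronglyMeasurable (by fun_prop))

lemma l1ATB_eq_integral : l1ATB mu = ∫ q, (|binNeg mu q| + |binPos mu q|) ∂ρ :=
  intervalIntegral.integral_of_le zero_le_one

lemma l1ATB_nonneg : 0 ≤ l1ATB mu :=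
  intervalIntegral.integral_nonneg zero_le_one fun _ _ => by positivity

variable (hmu : Integrable (fun x => x.1 - x.2) mu)
include hmu

lemma binNeg_add_binPos (q : ℝ) : binNeg mu q + binPos mu q = ∫ x, (x.1 - x.2) ∂mu := by
  rw [binNeg_eq_setIntegral, binPos_eq_setIntegral, ← Set.compl_Iio, Set.preimage_compl,
    integral_add_compl (measurableSet_Iio.preimage measurable_fst) hmu]

lemma abs_binNeg_le (q : ℝ) : |binNeg mu q| ≤ ∫ x, |x.1 - x.2| ∂mu := by
  rw [binNeg_eq_setIntegral]
  exact abs_integral_le_integral_abs.trans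
    (setIntegral_le_integral hmu.abs (ae_of_all _ fun _ => abs_nonneg _))

lemma abs_binPos_le (q : ℝ) : |binPos mu q| ≤ ∫ x, |x.1 - x.2| ∂mu := by
  rw [binPos_eq_setIntegral]
  exact abs_integral_le_integral_abs.trans
    (setIntegral_le_integral hmu.abs (ae_of_all _ fun _ => abs_nonneg _))

variable [SFinite mu] {ν : Measure ℝ} [IsFiniteMeasure ν]

lemma integrable_binNeg : Integrable (binNeg mu) ν :=
  have hmeas : Measurable fun p : ℝ × ℝ × ℝ =>
      (p.2.1 - p.2.2) * (if p.2.1 < p.1 then (1:ℝ) else 0) := by fun_prop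
  .of_bound hmeas.stronglyMeasurable.integral_prod_right'.aestronglyMeasurable _
    (ae_of_all _ (abs_binNeg_le hmu))

lemma integrable_binPos : Integrable (binPos mu) ν :=
  have hmeas : Measurable fun p : ℝ × ℝ × ℝ =>
      (p.2.1 - p.2.2) * (if p.1 ≤ p.2.1 then (1:ℝ) else 0) := by fun_prop
  .of_bound hmeas.stronglyMeasurable.integral_prod_right'.aestronglyMeasurable _
    (ae_of_all _ (abs_binPos_le hmu))

lemma integrable_abs_binNeg_add_abs_binPos :
    Integrable (fun q => |binNeg mu q| + |binPos mu q|) ν :=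
  (integrable_binNeg hmu).abs.add (integrable_binPos hmu).abs

lemma abs_integral_le_l1ATB : |∫ x, (x.1 - x.2) ∂mu| ≤ l1ATB mu := by
  calc |∫ x, (x.1 - x.2) ∂mu| = ∫ _q, |∫ x, (x.1 - x.2) ∂mu| ∂ρ := by simp
    _ ≤ ∫ q, (|binNeg mu q| + |binPos mu q|) ∂ρ := by
      refine integral_mono_of_nonneg (ae_of_all _ fun _ => abs_nonneg _)
        (integrable_abs_binNeg_add_abs_binPos hmu) (ae_of_all _ fun q => ?_)
      rw [← binNeg_add_binPos hmu q]
      exact abs_add_le _ _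
    _ = l1ATB mu := l1ATB_eq_integral.symm

end Bins

section Fubini

variable {mu : Measure (ℝ × ℝ)} {ν : Measure ℝ} {g : ℝ → ℝ}
  (hmu : Integrable (fun x => x.1 - x.2) mu) (hg : Integrable g ν)
include hmu hg

lemma integrable_prod_sub_mul_ite_le :
    Integrable (fun p : (ℝ × ℝ) × ℝ => (p.1.1 - p.1.2) * (g p.2 * if p.2 ≤ p.1.1 then 1 else 0))
      (mu.prod ν) := by
  refine (hmu.abs.mul_prod hg.abs).mono' ?_ (ae_of_all _ fun p => ?_)
  · have hite : Measurable fun p : (ℝ × ℝ) × ℝ => if p.2 ≤ p.1.1 then (1:ℝ) else 0 := by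
      fun_prop
    exact hmu.1.comp_fst.mul (hg.1.comp_snd.mul hite.aestronglyMeasurable)
  · simp only [norm_mul, Real.norm_eq_abs]
    gcongr
    exact mul_le_of_le_one_right (abs_nonneg _) (abs_ite_one_zero_le _)

variable [SFinite ν]

lemma integrable_sub_mul_integral_ite_le :
    Integrable (fun x : ℝ × ℝ => (x.1 - x.2) * ∫ q, g q * (if q ≤ x.1 then 1 else 0) ∂ν) mu := by
  simpa only [integral_const_mul] using (integrable_prod_sub_mul_ite_le hmu hg).integral_prod_left

lemma integral_sub_mul_integral_ite_le [SFinite mu] :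
    ∫ x, (x.1 - x.2) * ∫ q, g q * (if q ≤ x.1 then 1 else 0) ∂ν ∂mu
      = ∫ q, g q * binPos mu q ∂ν := by
  simp_rw [← integral_const_mul]
  rw [integral_integral_swap (integrable_prod_sub_mul_ite_le hmu hg)]
  simp_rw [binPos, ← integral_const_mul]
  congr with q
  congr with x
  ring

end Fubini

section Lipschitz

variable {f : ℝ → ℝ} {K : NNReal}

lemma LipschitzOnWith.eq_add_integral_deriv_mul_ite (hf : LipschitzOnWith K f (Set.Icc 0 1))
    {v : ℝ} (hv : v ∈ Set.Icc (0:ℝ) 1) :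
    f v = f 0 + ∫ q, deriv f q * (if q ≤ v then 1 else 0) ∂ρ := by
  have hac :=
    (hf.mono (Set.uIcc_subset_Icc ⟨le_rfl, zero_le_one⟩ hv)).absolutelyContinuousOnInterval
  have hind :
      (fun q => deriv f q * (if q ≤ v then 1 else 0)) = (Set.Iic v).indicator (deriv f) := by
    ext q; simp [Set.indicator, mul_ite]
  rw [hind, integral_indicator measurableSet_Iic, Measure.restrict_restrict measurableSet_Iic,
    Set.Iic_inter_Ioc_of_le hv.2, ← intervalIntegral.integral_of_le hv.1,
    hac.integral_deriv_eq_sub]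
  ring

lemma LipschitzOnWith.integral_deriv_eq_sub (hf : LipschitzOnWith K f (Set.Icc 0 1)) :
    ∫ q, deriv f q ∂ρ = f 1 - f 0 := by
  rw [← intervalIntegral.integral_of_le zero_le_one,
    (hf.mono (by simp)).absolutelyContinuousOnInterval.integral_deriv_eq_sub]

lemma LipschitzOnWith.ae_abs_deriv_le (hf : LipschitzOnWith K f (Set.Icc 0 1)) :
    ∀ᵐ q ∂ρ, |deriv f q| ≤ K := by
  rw [← restrict_Ioo_eq_restrict_Ioc]
  filter_upwards [ae_restrict_mem measurableSet_Ioo] with q hq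
  exact norm_deriv_le_of_lipschitzOn (Icc_mem_nhds hq.1 hq.2) hf

end Lipschitz

lemma integral_sub_mul_le_of_lipschitzOnWith {mu : Measure (ℝ × ℝ)} [SFinite mu]
    (hmu : Integrable (fun x => x.1 - x.2) mu) (hsupp : ∀ᵐ x ∂mu, x.1 ∈ Set.Icc (0:ℝ) 1)
    {w : ℝ → ℝ} {K : NNReal} (hw : LipschitzOnWith K w (Set.Icc 0 1)) :
    ∫ x, (x.1 - x.2) * w x.1 ∂mu ≤ (|w 0 + w 1| / 2 + K / 2) * l1ATB mu := by
  set c₀ := ∫ x, (x.1 - x.2) ∂mu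
  have hderiv := hw.ae_abs_deriv_le
  have hg : Integrable (deriv w) ρ := .of_bound (measurable_deriv w).aestronglyMeasurable K hderiv
  have hgbin : Integrable (fun q => deriv w q * (binPos mu q - binNeg mu q)) ρ :=
    ((integrable_binPos hmu).sub (integrable_binNeg hmu)).bdd_mul hg.1 hderiv
  have hrep : ∫ x, (x.1 - x.2) * w x.1 ∂mu = w 0 * c₀ + ∫ q, deriv w q * binPos mu q ∂ρ := by
    calc ∫ x, (x.1 - x.2) * w x.1 ∂mu
        = ∫ x, ((x.1 - x.2) * w 0
            + (x.1 - x.2) * ∫ q, deriv w q * (if q ≤ x.1 then 1 else 0) ∂ρ) ∂mu := by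
          refine integral_congr_ae ?_
          filter_upwards [hsupp] with x hx
          rw [hw.eq_add_integral_deriv_mul_ite hx]
          ring
      _ = _ := by
          rw [integral_add (hmu.mul_const _) (integrable_sub_mul_integral_ite_le hmu hg),
            integral_mul_const, integral_sub_mul_integral_ite_le hmu hg, mul_comm]
  -- `binNeg = c₀ - binPos` turns the `binPos`-weighted integral into a symmetric one
  have hsymm : ∫ q, deriv w q * binPos mu q ∂ρ
      = (w 1 - w 0) / 2 * c₀ + 1 / 2 * ∫ q, deriv w q * (binPos mu q - binNeg mu q) ∂ρ := by
    have hpt (q : ℝ) : deriv w q * binPos mu q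
        = c₀ / 2 * deriv w q + 1 / 2 * (deriv w q * (binPos mu q - binNeg mu q)) := by
      linear_combination (deriv w q / 2) * binNeg_add_binPos hmu q
    simp_rw [hpt]
    rw [integral_add (hg.const_mul _) (hgbin.const_mul _), integral_const_mul,
      integral_const_mul, hw.integral_deriv_eq_sub]
    ring
  have hbins : |∫ q, deriv w q * (binPos mu q - binNeg mu q) ∂ρ| ≤ K * l1ATB mu := by
    rw [l1ATB_eq_integral, ← integral_const_mul, ← Real.norm_eq_abs]
    refine norm_integral_le_of_norm_le
      ((integrable_abs_binNeg_add_abs_binPos hmu (ν := ρ)).const_mul _) ?_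
    filter_upwards [hderiv] with q hq
    rw [norm_mul, Real.norm_eq_abs, Real.norm_eq_abs, add_comm |binNeg mu q|]
    exact mul_le_mul hq (abs_sub _ _) (abs_nonneg _) K.2
  have hendpoints : (w 0 + w 1) / 2 * c₀ ≤ |w 0 + w 1| / 2 * l1ATB mu := by
    refine (le_abs_self _).trans ?_
    rw [abs_mul, abs_div, abs_two]
    exact mul_le_mul_of_nonneg_left (abs_integral_le_l1ATB hmu) (by positivity)
  rw [hrep, hsymm]
  linarith [(le_abs_self _).trans hbins]

lemma smCal_le_l1ATB {mu : Measure (ℝ × ℝ)} [SFinite mu]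
    (hmu : Integrable (fun x => x.1 - x.2) mu) (hsupp : ∀ᵐ x ∂mu, x.1 ∈ Set.Icc (0:ℝ) 1) :
    smCal mu ≤ 3 / 2 * l1ATB mu := by
  refine Real.sSup_le ?_ (mul_nonneg (by norm_num) l1ATB_nonneg)
  rintro c ⟨w, hw, hw_mem, rfl⟩
  refine (integral_sub_mul_le_of_lipschitzOnWith hmu hsupp hw).trans ?_
  have h0 := hw_mem 0 (by simp)
  have h1 := hw_mem 1 (by simp)
  have hsum : |w 0 + w 1| ≤ 2 := abs_le.2 ⟨by linarith [h0.1, h1.1], by linarith [h0.2, h1.2]⟩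
  gcongr
  · exact l1ATB_nonneg
  · push_cast; linarith

section Calibration

variable {ν : Measure (ℝ × ℝ)} (h : Calibrated ν) (h₁ : Integrable Prod.fst ν)
  (h₂ : Integrable Prod.snd ν)
include h h₁ h₂

lemma Calibrated.setIntegral_sub_eq_zero {s : Set ℝ} (hs : MeasurableSet s) :
    ∫ x in Prod.fst ⁻¹' s, (x.1 - x.2) ∂ν = 0 := by
  rw [integral_sub h₁.integrableOn h₂.integrableOn, h s hs, sub_self]

lemma Calibrated.binNeg_eq_zero (q : ℝ) : binNeg ν q = 0 := by
  rw [binNeg_eq_setIntegral]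
  exact h.setIntegral_sub_eq_zero h₁ h₂ measurableSet_Iio

lemma Calibrated.binPos_eq_zero (q : ℝ) : binPos ν q = 0 := by
  rw [binPos_eq_setIntegral]
  exact h.setIntegral_sub_eq_zero h₁ h₂ measurableSet_Ici

end Calibration

lemma calibrated_map_diag (m : Measure ℝ) : Calibrated (m.map fun y => (y, y)) := by
  intro s hs
  have hdiag : Measurable fun y : ℝ => (y, y) := by fun_prop
  rw [setIntegral_map (hs.preimage measurable_fst) measurable_snd.aestronglyMeasurable
      hdiag.aemeasurable,
    setIntegral_map (hs.preimage measurable_fst) measurable_fst.aestronglyMeasurable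
      hdiag.aemeasurable]

def binBiasShift (u v y q : ℝ) : ℝ :=
  |(v - y) * (if v < q then 1 else 0) - (u - y) * (if u < q then 1 else 0)|
    + |(v - y) * (if q ≤ v then 1 else 0) - (u - y) * (if q ≤ u then 1 else 0)|

lemma binBiasShift_nonneg (u v y q : ℝ) : 0 ≤ binBiasShift u v y q := by
  unfold binBiasShift; positivity

lemma binBiasShift_le (u v y q : ℝ) : binBiasShift u v y q
    ≤ |v - u| + 2 * |u - y| * |(if v < q then (1:ℝ) else 0) - (if u < q then 1 else 0)| := by
  unfold binBiasShift
  rcases lt_or_ge v q with h1 | h1 <;> rcases lt_or_ge u q with h2 | h2 <;>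
    simp [h1, h2, not_le.2, not_lt.2] <;>
    linarith [abs_sub_le v u y, abs_sub_comm u v, abs_sub_comm u y, abs_nonneg (u - y)]

lemma abs_ite_lt_sub_ite_lt (u v q : ℝ) :
    |(if v < q then (1:ℝ) else 0) - (if u < q then 1 else 0)| = (Set.uIoc u v).indicator 1 q := by
  classical
  rw [Set.indicator_apply, Set.mem_uIoc]
  split_ifs <;> norm_num <;> grind

lemma abs_ite_lt_sub_ite_lt_le_one (u v q : ℝ) :
    |(if v < q then (1:ℝ) else 0) - (if u < q then 1 else 0)| ≤ 1 := by
  rw [abs_ite_lt_sub_ite_lt]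
  exact Set.indicator_le_self' (fun _ _ => zero_le_one) q

lemma setIntegral_abs_ite_lt_sub_ite_lt_le (u v : ℝ) (s : Set ℝ) :
    ∫ q in s, |(if v < q then (1:ℝ) else 0) - (if u < q then 1 else 0)| ≤ |u - v| := by
  simp_rw [abs_ite_lt_sub_ite_lt]
  rw [integral_indicator_one measurableSet_uIoc, measureReal_restrict_apply measurableSet_uIoc]
  calc volume.real (Set.uIoc u v ∩ s) ≤ volume.real (Set.uIoc u v) := by
        gcongr
        · simp
        · exact Set.inter_subset_left
    _ = |u - v| := by rw [Set.uIoc, Real.volume_real_Ioc_of_le inf_le_sup, max_sub_min_eq_abs']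

lemma integral_binBiasShift_le {u y : ℝ} (huy : |u - y| ≤ 1) (v : ℝ) :
    ∫ q, binBiasShift u v y q ∂ρ ≤ 3 * |u - v| := by
  have hmeas : Measurable fun q : ℝ =>
      |(if v < q then (1:ℝ) else 0) - (if u < q then 1 else 0)| := by fun_prop
  have hind : Integrable (fun q : ℝ =>
      |(if v < q then (1:ℝ) else 0) - (if u < q then 1 else 0)|) ρ :=
    .of_bound hmeas.aestronglyMeasurable 1 (ae_of_all _ fun q => by
      rw [Real.norm_eq_abs, abs_abs]; exact abs_ite_lt_sub_ite_lt_le_one u v q)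
  calc ∫ q, binBiasShift u v y q ∂ρ
      ≤ ∫ q, (|v - u| + 2 * |u - y|
          * |(if v < q then (1:ℝ) else 0) - (if u < q then 1 else 0)|) ∂ρ :=
        integral_mono_of_nonneg (ae_of_all _ (binBiasShift_nonneg u v y))
          ((integrable_const _).add (hind.const_mul _)) (ae_of_all _ (binBiasShift_le u v y))
    _ ≤ |u - v| + 2 * 1 * |u - v| := by
        rw [integral_add (integrable_const _) (hind.const_mul _), integral_const_mul]
        simp only [integral_const, measureReal_restrict_apply_univ,
          Real.volume_real_Ioc_of_le zero_le_one, sub_zero, one_smul, abs_sub_comm v u]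
        gcongr
        exact setIntegral_abs_ite_lt_sub_ite_lt_le u v _
    _ = 3 * |u - v| := by ring

section Coupling

variable {P : Measure (ℝ × ℝ × ℝ)} (hu : Integrable (fun x => x.1) P)
  (hv : Integrable (fun x => x.2.1) P) (hy : Integrable (fun x => x.2.2) P)
  (hcal : Calibrated (P.map fun x => (x.1, x.2.2)))
include hu hv hy hcal

lemma abs_binNeg_add_abs_binPos_map_le_of_calibrated (q : ℝ) :
    |binNeg (P.map fun x => x.2) q| + |binPos (P.map fun x => x.2) q|
      ≤ ∫ x, binBiasShift x.1 x.2.1 x.2.2 q ∂P := by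
  have hproj : Measurable fun x : ℝ × ℝ × ℝ => (x.1, x.2.2) := by fun_prop
  have hν₁ : Integrable Prod.fst (P.map fun x => (x.1, x.2.2)) :=
    (integrable_map_measure measurable_fst.aestronglyMeasurable hproj.aemeasurable).2 hu
  have hν₂ : Integrable Prod.snd (P.map fun x => (x.1, x.2.2)) :=
    (integrable_map_measure measurable_snd.aestronglyMeasurable hproj.aemeasurable).2 hy
  have hneg {g : ℝ × ℝ × ℝ → ℝ} (hg : Integrable g P) (hg' : Measurable g) :
      Integrable (fun x => (g x - x.2.2) * if g x < q then 1 else 0) P :=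
    (hg.sub hy).mul_ite_one_zero (measurableSet_lt hg' measurable_const)
  have hpos {g : ℝ × ℝ × ℝ → ℝ} (hg : Integrable g P) (hg' : Measurable g) :
      Integrable (fun x => (g x - x.2.2) * if q ≤ g x then 1 else 0) P :=
    (hg.sub hy).mul_ite_one_zero (measurableSet_le measurable_const hg')
  have hbinNeg : binNeg (P.map fun x => x.2) q = ∫ x, ((x.2.1 - x.2.2)
      * (if x.2.1 < q then 1 else 0) - (x.1 - x.2.2) * (if x.1 < q then 1 else 0)) ∂P := by
    rw [integral_sub (hneg hv (by fun_prop)) (hneg hu measurable_fst),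
      ← binNeg_map measurable_snd, ← binNeg_map hproj, hcal.binNeg_eq_zero hν₁ hν₂, sub_zero]
  have hbinPos : binPos (P.map fun x => x.2) q = ∫ x, ((x.2.1 - x.2.2)
      * (if q ≤ x.2.1 then 1 else 0) - (x.1 - x.2.2) * (if q ≤ x.1 then 1 else 0)) ∂P := by
    rw [integral_sub (hpos hv (by fun_prop)) (hpos hu measurable_fst),
      ← binPos_map measurable_snd, ← binPos_map hproj, hcal.binPos_eq_zero hν₁ hν₂, sub_zero]
  rw [hbinNeg, hbinPos]
  exact (add_le_add abs_integral_le_integral_abs abs_integral_le_integral_abs).trans_eq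
    (integral_add ((hneg hv (by fun_prop)).sub (hneg hu measurable_fst)).abs
      ((hpos hv (by fun_prop)).sub (hpos hu measurable_fst)).abs).symm

lemma l1ATB_map_le_of_calibrated [SFinite P] (huy : ∀ᵐ x ∂P, |x.1 - x.2.2| ≤ 1) :
    l1ATB (P.map fun x => x.2) ≤ 3 * ∫ x, |x.1 - x.2.1| ∂P := by
  have hF : Integrable (fun p : ℝ × (ℝ × ℝ × ℝ) => binBiasShift p.2.1 p.2.2.1 p.2.2.2 p.1)
      ((ρ).prod P) := by
    refine (((hv.sub hu).abs.add ((hu.sub hy).abs.const_mul 2)).comp_snd ρ).mono' ?_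
      (ae_of_all _ fun p => ?_)
    · exact Measurable.aestronglyMeasurable (by unfold binBiasShift; fun_prop)
    · rw [Real.norm_eq_abs, abs_of_nonneg (binBiasShift_nonneg ..)]
      refine (binBiasShift_le ..).trans ?_
      simp only [Pi.add_apply, Pi.sub_apply]
      linarith [mul_le_of_le_one_right (mul_nonneg zero_le_two (abs_nonneg (p.2.1 - p.2.2.2)))
        (abs_ite_lt_sub_ite_lt_le_one p.2.1 p.2.2.1 p.1)]
  calc l1ATB (P.map fun x => x.2)
      ≤ ∫ q, ∫ x, binBiasShift x.1 x.2.1 x.2.2 q ∂P ∂ρ := by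
        rw [l1ATB_eq_integral]
        exact integral_mono_of_nonneg (ae_of_all _ fun _ => by positivity)
          hF.integral_prod_left
          (ae_of_all _ (abs_binNeg_add_abs_binPos_map_le_of_calibrated hu hv hy hcal))
    _ = ∫ x, ∫ q, binBiasShift x.1 x.2.1 x.2.2 q ∂ρ ∂P := integral_integral_swap hF
    _ ≤ ∫ x, 3 * |x.1 - x.2.1| ∂P := by
        refine integral_mono_of_nonneg
          (ae_of_all _ fun x => integral_nonneg (binBiasShift_nonneg x.1 x.2.1 x.2.2))
          ((hu.sub hv).abs.const_mul 3) ?_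
        filter_upwards [huy] with x hx using integral_binBiasShift_le hx _
    _ = 3 * ∫ x, |x.1 - x.2.1| ∂P := integral_const_mul _ _

end Coupling

lemma l1ATB_le_three_mul_distCal {mu : Measure (ℝ × ℝ)} [IsProbabilityMeasure mu]
    (hsupp : ∀ᵐ x ∂mu, x.1 ∈ Set.Icc (0:ℝ) 1 ∧ x.2 ∈ Set.Icc (0:ℝ) 1) :
    l1ATB mu ≤ 3 * distCal mu := by
  have htriv : Measurable fun x : ℝ × ℝ => (x.2, x) := by fun_prop
  have hdiag : ((fun x : ℝ × ℝ × ℝ => (x.1, x.2.2)) ∘ fun x : ℝ × ℝ => (x.2, x))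
      = (fun y : ℝ => (y, y)) ∘ Prod.snd := rfl
  suffices l1ATB mu / 3 ≤ distCal mu by linarith
  refine le_csInf ⟨_, mu.map fun x => (x.2, x),
    Measure.isProbabilityMeasure_map htriv.aemeasurable, ?_, ?_, ?_, rfl⟩ ?_
  · rw [Measure.map_map measurable_snd htriv]
    exact Measure.map_id
  · rw [Measure.map_map (by fun_prop) htriv, hdiag, ← Measure.map_map (by fun_prop) measurable_snd]
    exact calibrated_map_diag _
  · exact (ae_map_iff htriv.aemeasurable (measurableSet_Icc.preimage measurable_fst)).2
      (hsupp.mono fun _ hx => hx.2)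
  rintro c ⟨P, hP, rfl, hcal, hu, rfl⟩
  have hvy := ae_of_ae_map measurable_snd.aemeasurable hsupp
  have huy : ∀ᵐ x ∂P, |x.1 - x.2.2| ≤ 1 := by
    filter_upwards [hu, hvy] with x hu hy
    rw [abs_le]; constructor <;> linarith [hu.1, hu.2, hy.2.1, hy.2.2]
  have := l1ATB_map_le_of_calibrated
    (integrable_of_ae_mem_Icc_zero_one (by fun_prop) hu)
    (integrable_of_ae_mem_Icc_zero_one (by fun_prop) (hvy.mono fun _ hx => hx.1))
    (integrable_of_ae_mem_Icc_zero_one (by fun_prop) (hvy.mono fun _ hx => hx.2)) hcal huy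
  linarith

/-- ℓ1-ATB is a constant-factor approximation of the smooth calibration error and the
lower distance to calibration. -/
theorem l1atb_constant_factor (mu : Measure (ℝ × ℝ)) [IsProbabilityMeasure mu]
    (hsupp : ∀ᵐ x ∂mu, x.1 ∈ Set.Icc (0:ℝ) 1 ∧ (x.2 = 0 ∨ x.2 = 1)) :
    (2 / 3) * smCal mu ≤ l1ATB mu ∧ l1ATB mu ≤ 3 * distCal mu := by
  have hsupp' : ∀ᵐ x ∂mu, x.1 ∈ Set.Icc (0:ℝ) 1 ∧ x.2 ∈ Set.Icc (0:ℝ) 1 :=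
    hsupp.mono fun x ⟨hv, hy⟩ => ⟨hv, by rcases hy with h | h <;> simp [h]⟩
  have hmu : Integrable (fun x => x.1 - x.2) mu :=
    (integrable_of_ae_mem_Icc_zero_one (by fun_prop) (hsupp'.mono fun _ hx => hx.1)).sub
      (integrable_of_ae_mem_Icc_zero_one (by fun_prop) (hsupp'.mono fun _ hx => hx.2))
  have hsmCal := smCal_le_l1ATB hmu (hsupp'.mono fun _ hx => hx.1)
  exact ⟨by linarith, l1ATB_le_three_mul_distCal hsupp'⟩

end
end
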